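/- For every symmetric 3×3 real matrix A and every R ∈ SO(3), ⟨ψ(R), ψ(AR)⟩ = ψ(R)ᵀ Ā ψ(R), where Ā := (1/2)(tr(A)·I − A). -/

import Mathlib

open Matrix

/-- `R ∈ SO(3)`: `R Rᵀ = I` and `det R = 1`. -/
def IsSO3 (R : Matrix (Fin 3) (Fin 3) ℝ) : Prop := R * Rᵀ = 1 ∧ R.det = 1

/-- `ψ(A) = vex(P_a(A))` where `P_a(A) = (A - Aᵀ)/2`. -/
noncomputable def psi (A : Matrix (Fin 3) (Fin 3) ℝ) : Fin 3 → ℝ :=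
  ![(A 2 1 - A 1 2)/2, (A 0 2 - A 2 0)/2, (A 1 0 - A 0 1)/2]

/-- `Ā = (1/2)(tr(A)·I - A)`. -/
noncomputable def abar (A : Matrix (Fin 3) (Fin 3) ℝ) : Matrix (Fin 3) (Fin 3) ℝ :=
  (1/2 : ℝ) • (Matrix.trace A • (1 : Matrix (Fin 3) (Fin 3) ℝ) - A)

/-!
Both sides are trace expressions. For any `M`, `N` one has
`⟨ψ M, ψ N⟩ = (tr (Mᵀ N) - tr (M N)) / 4`, and for symmetric `A` one has
`Ā ψ M = ψ (A (M - Mᵀ)) / 2` (the vector form of `A [w]ₓ + [w]ₓ A = [(tr A - A) w]ₓ`).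
Cycling traces, the difference of the two sides becomes `tr (A (M Mᵀ - Mᵀ M)) / 8`, which
vanishes as soon as `M` commutes with `Mᵀ`, in particular for orthogonal `M`.
-/

theorem psi_dotProduct_psi (M N : Matrix (Fin 3) (Fin 3) ℝ) :
    psi M ⬝ᵥ psi N = (trace (Mᵀ * N) - trace (M * N)) / 4 := by
  simp only [psi, dotProduct, Fin.sum_univ_three, trace_fin_three, mul_apply, transpose_apply,
    cons_val_zero, cons_val_one, cons_val]
  ring

theorem abar_mulVec_psi {A : Matrix (Fin 3) (Fin 3) ℝ} (hA : A.IsSymm)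
    (M : Matrix (Fin 3) (Fin 3) ℝ) :
    abar A *ᵥ psi M = (1 / 2 : ℝ) • psi (A * (M - Mᵀ)) := by
  have h10 : A 1 0 = A 0 1 := hA.apply _ _
  have h20 : A 2 0 = A 0 2 := hA.apply _ _
  have h21 : A 2 1 = A 1 2 := hA.apply _ _
  ext i
  fin_cases i <;>
  · simp only [abar, psi, mulVec, dotProduct, Fin.sum_univ_three, trace_fin_three, mul_apply,
      transpose_apply, Matrix.smul_apply, Matrix.sub_apply, one_apply, Fin.isValue, Fin.zero_eta,
      Fin.mk_one, Fin.reduceFinMk, Fin.reduceEq, ↓reduceIte, cons_val, Pi.smul_apply, smul_eq_mul,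
      h10, h20, h21]
    ring

theorem psi_dotProduct_psi_mul (A M : Matrix (Fin 3) (Fin 3) ℝ) :
    psi M ⬝ᵥ psi (A * M) = (trace (A * (M * Mᵀ)) - trace (M * A * M)) / 4 := by
  rw [psi_dotProduct_psi, trace_mul_comm Mᵀ, Matrix.mul_assoc, Matrix.mul_assoc]

theorem psi_dotProduct_abar_mulVec_psi {A : Matrix (Fin 3) (Fin 3) ℝ} (hA : A.IsSymm)
    (M : Matrix (Fin 3) (Fin 3) ℝ) :
    psi M ⬝ᵥ abar A *ᵥ psi M =
      (trace (A * (M * Mᵀ)) + trace (A * (Mᵀ * M)) - 2 * trace (M * A * M)) / 8 := by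
  have h₁ : trace (Mᵀ * (A * M)) = trace (A * (M * Mᵀ)) := by
    rw [trace_mul_comm, Matrix.mul_assoc]
  have h₂ : trace (Mᵀ * (A * Mᵀ)) = trace (M * A * M) := by
    rw [← trace_transpose, transpose_mul, transpose_mul, transpose_transpose, hA.eq,
      Matrix.mul_assoc]
  have h₃ : trace (M * (A * Mᵀ)) = trace (A * (Mᵀ * M)) := by
    rw [trace_mul_comm, Matrix.mul_assoc]
  simp only [abar_mulVec_psi hA, dotProduct_smul, psi_dotProduct_psi, mul_sub, trace_sub, h₁, h₂,
    h₃, ← Matrix.mul_assoc M A M, smul_eq_mul]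
  ring

theorem psi_dotProduct_psi_mul_sub_abar {A : Matrix (Fin 3) (Fin 3) ℝ} (hA : A.IsSymm)
    (M : Matrix (Fin 3) (Fin 3) ℝ) :
    psi M ⬝ᵥ psi (A * M) - psi M ⬝ᵥ abar A *ᵥ psi M = trace (A * (M * Mᵀ - Mᵀ * M)) / 8 := by
  rw [psi_dotProduct_psi_mul, psi_dotProduct_abar_mulVec_psi hA, mul_sub, trace_sub]
  ring

/-- For symmetric `A` and `R ∈ SO(3)`: `⟨ψ(R), ψ(AR)⟩ = ψ(R)ᵀ Ā ψ(R)`. -/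
theorem stmt5 (A R : Matrix (Fin 3) (Fin 3) ℝ) (hA : Aᵀ = A) (hR : IsSO3 R) :
    psi R ⬝ᵥ psi (A * R) = psi R ⬝ᵥ (abar A).mulVec (psi R) := by
  have hRR : R * Rᵀ = Rᵀ * R := by rw [hR.1, mul_eq_one_comm.mp hR.1]
  rw [← sub_eq_zero, psi_dotProduct_psi_mul_sub_abar hA, hRR, sub_self, Matrix.mul_zero,
    trace_zero, zero_div]
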